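/- Fix a complex number s with Re(s) > 0, and extend S₁₂ to all of (0,1) by setting S₁₂(x) = 0 for rational x. Then the family, indexed by pairs of positive integers (a₁,a₂), of interval integrals ∫ from a₂/(1+a₁a₂) to (1+a₂)/(1+a₁+a₁a₂) of ((1 + a₁(a₂-a₁))·x + (a₁-a₂)) / ((a₂-a₁)(1+a₁a₂)·x + 1 + a₂(a₁-a₂)) · x^{s-1} dx has sum (HasSum, i.e. unconditionally convergent sum) equal to ∫₀¹ S₁₂(x)·x^{s-1} dx. -/

import Mathlib

open MeasureTheory intervalIntegral Classical

/-- The Gauss map `G(x) = 1/x - ⌊1/x⌋`. -/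
noncomputable def gaussMap (x : ℝ) : ℝ := 1 / x - ⌊1 / x⌋

/-- The first-two-digit swap map of continued fractions, extended by `0` at
rational points: for irrational `x`,
`S₁₂(x) = 1/(a₂ + 1/(a₁ + G(G(x))))` with `a₁ = ⌊1/x⌋`, `a₂ = ⌊1/G(x)⌋`. -/
noncomputable def S12ext (x : ℝ) : ℝ :=
  if Irrational x then
    1 / ((⌊1 / gaussMap x⌋ : ℝ) + 1 / ((⌊1 / x⌋ : ℝ) + gaussMap (gaussMap x)))
  else 0

/-!
Writing an irrational `x ∈ (0,1)` as `x = 1/(a + 1/(b + u))` with digits `a, b ≥ 1` and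
`u = G(G(x))`, the swap map sends it to `1/(b + 1/(a + u))`, which is the Möbius
transformation for the digits `a, b` evaluated at `x`. The cylinders of points with first digits
`a, b` are disjoint open intervals covering the irrationals of `(0,1)`, and `S₁₂` is bounded
by `1` there, so `S₁₂(x)·x^{s-1}` is integrable on `(0,1)` for `Re s > 0` and its integral is
the sum of the integrals over the cylinders by countable additivity.
-/

open Set

theorem one_div_eq_floor_add_gaussMap (x : ℝ) : 1 / x = ⌊1 / x⌋ + gaussMap x :=
  (Int.floor_add_fract _).symm

theorem gaussMap_nonneg (x : ℝ) : 0 ≤ gaussMap x :=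
  Int.fract_nonneg _

theorem irrational_gaussMap {x : ℝ} (hx : Irrational x) : Irrational (gaussMap x) := by
  rw [gaussMap, one_div]
  exact hx.inv.sub_intCast _

theorem gaussMap_mem_Ioo {x : ℝ} (hx : Irrational x) : gaussMap x ∈ Ioo 0 1 :=
  ⟨(gaussMap_nonneg x).lt_of_ne (irrational_gaussMap hx).ne_zero.symm, Int.fract_lt_one _⟩

theorem floor_one_div_pos {x : ℝ} (hx : x ∈ Ioo 0 1) : 0 < ⌊1 / x⌋ :=
  Int.floor_pos.2 (by rw [le_div_iff₀ hx.1]; linarith [hx.2])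

noncomputable def swapMobius (a b x : ℝ) : ℝ :=
  ((1 + a * (b - a)) * x + (a - b)) / ((b - a) * (1 + a * b) * x + 1 + b * (a - b))

theorem swapMobius_one_div_add_one_div_add {a b u : ℝ} (ha : 0 < a) (hb : 0 < b) (hu : 0 ≤ u) :
    swapMobius a b (1 / (a + 1 / (b + u))) = 1 / (b + 1 / (a + u)) := by
  have hD : 0 < a * b + a * u + 1 := by positivity
  have hx : 1 / (a + 1 / (b + u)) = (b + u) / (a * b + a * u + 1) := by
    field_simp
  have hnum : (1 + a * (b - a)) * ((b + u) / (a * b + a * u + 1)) + (a - b) =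
      (a + u) / (a * b + a * u + 1) := by
    field_simp; ring
  have hden : (b - a) * (1 + a * b) * ((b + u) / (a * b + a * u + 1)) + 1 + b * (a - b) =
      (a * b + b * u + 1) / (a * b + a * u + 1) := by
    field_simp; ring
  rw [hx, swapMobius, hnum, hden, div_div_div_cancel_right₀ hD.ne']
  field_simp

theorem S12ext_eq_swapMobius {x : ℝ} (hx : x ∈ Ioo 0 1) (hirr : Irrational x) :
    S12ext x = swapMobius ⌊1 / x⌋ ⌊1 / gaussMap x⌋ x := by
  have hx' : x = 1 / (⌊1 / x⌋ + 1 / (⌊1 / gaussMap x⌋ + gaussMap (gaussMap x))) := by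
    rw [← one_div_eq_floor_add_gaussMap, one_div_one_div, ← one_div_eq_floor_add_gaussMap,
      one_div_one_div]
  rw [S12ext, if_pos hirr, ← swapMobius_one_div_add_one_div_add
    (Int.cast_pos.2 (floor_one_div_pos hx))
    (Int.cast_pos.2 (floor_one_div_pos (gaussMap_mem_Ioo hirr))) (gaussMap_nonneg _), ← hx']

theorem S12ext_mem_Icc {x : ℝ} (hx : x ∈ Ioo 0 1) : S12ext x ∈ Icc 0 1 := by
  rw [S12ext]
  split_ifs with hirr
  · have ha : (1 : ℝ) ≤ ⌊1 / x⌋ := by exact_mod_cast floor_one_div_pos hx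
    have hb : (1 : ℝ) ≤ ⌊1 / gaussMap x⌋ := by
      exact_mod_cast floor_one_div_pos (gaussMap_mem_Ioo hirr)
    have hinv : 0 < 1 / ((⌊1 / x⌋ : ℝ) + gaussMap (gaussMap x)) := by
      have := gaussMap_nonneg (gaussMap x); positivity
    exact ⟨by positivity, (div_le_one (by positivity)).2 (by linarith)⟩
  · exact ⟨le_rfl, zero_le_one⟩

@[fun_prop]
theorem measurable_gaussMap : Measurable gaussMap :=
  (measurable_const.div measurable_id).sub (measurable_from_top.comp
    (measurable_const.div measurable_id).floor)

theorem measurable_S12ext : Measurable S12ext := by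
  have hirr : MeasurableSet {x : ℝ | Irrational x} :=
    (countable_range ((↑) : ℚ → ℝ)).measurableSet.compl
  exact Measurable.ite hirr (by fun_prop) measurable_const

theorem ae_irrational : ∀ᵐ x : ℝ, Irrational x :=
  (countable_range ((↑) : ℚ → ℝ)).ae_notMem volume

theorem mem_Ioo_iff_one_div_mem {p q x : ℝ} (hp : 0 < p) (hq : 0 < q) :
    x ∈ Ioo p q ↔ 0 < x ∧ 1 / x ∈ Ioo (1 / q) (1 / p) := by
  constructor
  · rintro ⟨hpx, hxq⟩
    have hx := hp.trans hpx
    exact ⟨hx, one_div_lt_one_div_of_lt hx hxq, one_div_lt_one_div_of_lt hp hpx⟩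
  · rintro ⟨hx, hqx, hxp⟩
    exact ⟨(one_div_lt_one_div hx hp).1 hxp, (one_div_lt_one_div hq hx).1 hqx⟩

/-- The points of `(0,1)` whose continued fraction expansion begins with the digits `a, b`. -/
def cfCylinder (a b : ℤ) : Set ℝ :=
  Ioo ((b : ℝ) / (1 + a * b)) ((1 + (b : ℝ)) / (1 + a + a * b))

theorem measurableSet_cfCylinder (a b : ℤ) : MeasurableSet (cfCylinder a b) :=
  measurableSet_Ioo

theorem mem_cfCylinder_iff {a b : ℤ} (ha : 0 < a) (hb : 0 < b) {x : ℝ} :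
    x ∈ cfCylinder a b ↔ 0 < x ∧ 1 / x - a ∈ Ioo (1 / ((b : ℝ) + 1)) (1 / b) := by
  rw [cfCylinder, mem_Ioo_iff_one_div_mem (by positivity) (by positivity)]
  have hlo : 1 / ((1 + (b : ℝ)) / (1 + a + a * b)) = a + 1 / (b + 1) := by
    field_simp; ring
  have hhi : 1 / ((b : ℝ) / (1 + a * b)) = a + 1 / b := by
    field_simp; ring
  rw [hlo, hhi]
  simp only [mem_Ioo]
  constructor <;> rintro ⟨hx, h₁, h₂⟩ <;> exact ⟨hx, by linarith, by linarith⟩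

theorem floor_eq_of_mem_cfCylinder {a b : ℤ} (ha : 0 < a) (hb : 0 < b) {x : ℝ}
    (hx : x ∈ cfCylinder a b) : ⌊1 / x⌋ = a ∧ ⌊1 / gaussMap x⌋ = b := by
  obtain ⟨-, ht⟩ := (mem_cfCylinder_iff ha hb).1 hx
  have hb' : (1 : ℝ) ≤ b := by exact_mod_cast hb
  have hfloor : ⌊1 / x⌋ = a := by
    have : 1 / (b : ℝ) ≤ 1 := (div_le_one (by positivity)).2 hb'
    have : 0 < 1 / ((b : ℝ) + 1) := by positivity
    exact Int.floor_eq_iff.2 ⟨by linarith [ht.1], by linarith [ht.2]⟩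
  refine ⟨hfloor, ?_⟩
  have := ((mem_Ioo_iff_one_div_mem (by positivity) (by positivity)).1 ht).2
  rw [one_div_one_div, one_div_one_div] at this
  rw [gaussMap, hfloor]
  exact Int.floor_eq_iff.2 ⟨this.1.le, this.2⟩

theorem mem_cfCylinder_floor {x : ℝ} (hx : x ∈ Ioo 0 1) (hirr : Irrational x) :
    x ∈ cfCylinder ⌊1 / x⌋ ⌊1 / gaussMap x⌋ := by
  have hG := gaussMap_mem_Ioo hirr
  have hb := floor_one_div_pos hG
  refine (mem_cfCylinder_iff (floor_one_div_pos hx) hb).2 ⟨hx.1, ?_⟩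
  change gaussMap x ∈ _
  have hirr' : Irrational (1 / gaussMap x) := by
    rw [one_div]; exact (irrational_gaussMap hirr).inv
  rw [mem_Ioo_iff_one_div_mem (by positivity) (by positivity), one_div_one_div, one_div_one_div]
  exact ⟨hG.1, (Int.floor_le _).lt_of_ne (hirr'.ne_int _).symm,
    Int.lt_floor_add_one _⟩

theorem cfCylinder_subset_Ioo {a b : ℤ} (ha : 0 < a) (hb : 0 < b) :
    cfCylinder a b ⊆ Ioo 0 1 := by
  intro x hx
  obtain ⟨hx0, ht, -⟩ := (mem_cfCylinder_iff ha hb).1 hx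
  have : (1 : ℝ) ≤ a := by exact_mod_cast ha
  have : (0 : ℝ) < 1 / ((b : ℝ) + 1) := by positivity
  have : 1 < 1 / x := by linarith
  exact ⟨hx0, by rwa [lt_div_iff₀ hx0, one_mul] at this⟩

theorem pairwise_disjoint_cfCylinder :
    Pairwise (Function.onFun Disjoint
      fun p : {p : ℤ × ℤ // 0 < p.1 ∧ 0 < p.2} => cfCylinder p.1.1 p.1.2) := by
  intro p q hpq
  refine disjoint_left.2 fun x hxp hxq => hpq ?_
  obtain ⟨hp₁, hp₂⟩ := floor_eq_of_mem_cfCylinder p.2.1 p.2.2 hxp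
  obtain ⟨hq₁, hq₂⟩ := floor_eq_of_mem_cfCylinder q.2.1 q.2.2 hxq
  exact Subtype.ext (Prod.ext (hp₁.symm.trans hq₁) (hp₂.symm.trans hq₂))

theorem iUnion_cfCylinder_ae_eq :
    (⋃ p : {p : ℤ × ℤ // 0 < p.1 ∧ 0 < p.2}, cfCylinder p.1.1 p.1.2)
      =ᵐ[volume] Ioo (0 : ℝ) 1 := by
  rw [Filter.eventuallyEq_set]
  filter_upwards [ae_irrational] with x hirr
  refine ⟨fun hx => ?_, fun hx => ?_⟩
  · obtain ⟨p, hp⟩ := mem_iUnion.1 hx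
    exact cfCylinder_subset_Ioo p.2.1 p.2.2 hp
  · have hdigits : 0 < ⌊1 / x⌋ ∧ 0 < ⌊1 / gaussMap x⌋ :=
      ⟨floor_one_div_pos hx, floor_one_div_pos (gaussMap_mem_Ioo hirr)⟩
    exact mem_iUnion.2 ⟨⟨(_, _), hdigits⟩, mem_cfCylinder_floor hx hirr⟩

theorem integrableOn_S12ext_mul_cpow {s : ℂ} (hs : 0 < s.re) :
    IntegrableOn (fun x : ℝ => (S12ext x : ℂ) * (x : ℂ) ^ (s - 1)) (Ioo 0 1) := by
  have hcpow : IntegrableOn (fun x : ℝ => (x : ℂ) ^ (s - 1)) (Ioo 0 1) :=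
    (integrableOn_Ioo_cpow_iff zero_lt_one).2 (by simpa using hs)
  refine hcpow.bdd_mul (c := 1)
    (Complex.measurable_ofReal.comp measurable_S12ext).aestronglyMeasurable ?_
  filter_upwards [ae_restrict_mem measurableSet_Ioo] with x hx
  obtain ⟨h₀, h₁⟩ := S12ext_mem_Icc hx
  rwa [Complex.norm_real, Real.norm_of_nonneg h₀]

theorem setIntegral_cfCylinder {a b : ℤ} (ha : 0 < a) (hb : 0 < b) (f : ℝ → ℂ) :
    ∫ x in cfCylinder a b, (S12ext x : ℂ) * f x =
      ∫ x in ((b : ℝ) / (1 + a * b))..((1 + (b : ℝ)) / (1 + a + a * b)),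
        (swapMobius a b x : ℂ) * f x := by
  have ha' : (0 : ℝ) < a := Int.cast_pos.2 ha
  have hb' : (0 : ℝ) < b := Int.cast_pos.2 hb
  have hle : (b : ℝ) / (1 + a * b) ≤ (1 + b) / (1 + a + a * b) := by
    rw [div_le_div_iff₀ (by positivity) (by positivity)]; nlinarith
  rw [intervalIntegral.integral_of_le hle, integral_Ioc_eq_integral_Ioo]
  refine setIntegral_congr_ae measurableSet_Ioo ?_
  filter_upwards [ae_irrational] with x hirr hx
  obtain ⟨h₁, h₂⟩ := floor_eq_of_mem_cfCylinder ha hb hx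
  rw [S12ext_eq_swapMobius (cfCylinder_subset_Ioo ha hb hx) hirr, h₁, h₂]

/-- For `Re s > 0`, the family of Möbius integrals over the fundamental intervals,
indexed by pairs of positive integers `(a₁, a₂)`, has (unconditional) sum equal to
`∫₀¹ S₁₂(x)·x^{s-1} dx`. -/
theorem hasSum_mobius_integrals (s : ℂ) (hs : 0 < s.re) :
    HasSum
      (fun p : {p : ℤ × ℤ // 0 < p.1 ∧ 0 < p.2} =>
        ∫ x in ((p.1.2 : ℝ) / (1 + p.1.1 * p.1.2))..
            ((1 + (p.1.2 : ℝ)) / (1 + p.1.1 + p.1.1 * p.1.2)),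
          (((1 + (p.1.1 : ℝ) * (p.1.2 - p.1.1)) * x + ((p.1.1 : ℝ) - p.1.2)) /
              ((((p.1.2 : ℝ) - p.1.1) * (1 + (p.1.1 : ℝ) * p.1.2)) * x +
                1 + (p.1.2 : ℝ) * ((p.1.1 : ℝ) - p.1.2)) : ℂ) *
            (x : ℂ) ^ (s - 1))
      (∫ x in (0:ℝ)..1, (S12ext x : ℂ) * (x : ℂ) ^ (s - 1)) := by
  have hsum := hasSum_integral_iUnion (fun _ => measurableSet_cfCylinder _ _)
    pairwise_disjoint_cfCylinder
    ((integrableOn_S12ext_mul_cpow hs).mono_set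
      (iUnion_subset fun p => cfCylinder_subset_Ioo p.2.1 p.2.2))
  rw [setIntegral_congr_set iUnion_cfCylinder_ae_eq, ← integral_Ioc_eq_integral_Ioo,
    ← intervalIntegral.integral_of_le zero_le_one] at hsum
  refine hsum.congr_fun fun p => ?_
  rw [setIntegral_cfCylinder p.2.1 p.2.2]
  push_cast [swapMobius]
  rfl
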